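/- arXiv:1109.3882 — 6 statements merged into one kernel-verified Lean document; each statement's English description precedes it below -/
import Mathlib

section
/- For any vectors a, b in ℝ², the norm of (a+b)/√(1+|a+b|²) + (a−b)/√(1+|a−b|²) is bounded below by C·|a|/(1+|a|+|b|)³ for some absolute constant C > 0. -/
open Real
open scoped RealInnerProductSpace

noncomputable abbrev jb (x : EuclideanSpace ℝ (Fin 2)) : ℝ := Real.sqrt (1 + ‖x‖ ^ 2)

lemma jb_sq (x : EuclideanSpace ℝ (Fin 2)) : jb x ^ 2 = 1 + ‖x‖ ^ 2 :=
  Real.sq_sqrt (by positivity)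

lemma jb_ge_one (x : EuclideanSpace ℝ (Fin 2)) : 1 ≤ jb x := by
  rw [show (1:ℝ) = Real.sqrt 1 by simp]
  exact Real.sqrt_le_sqrt (by nlinarith [sq_nonneg ‖x‖])

lemma keyR (α β s Y : ℝ) (hα : 1 ≤ α) (hβ : 1 ≤ β) (hβα : β ≤ α)
    (hY : 0 ≤ Y) (hY2 : Y ^ 2 = (α ^ 2 - 1) * (β ^ 2 - 1)) (hs : s ≤ Y) :
    α * β * (α ^ 2 + β ^ 2 - 2 - 2 * s) ≤ α ^ 3 * (α + β) * (α * β - 1 - s) := by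
  have h0 : 0 ≤ α * β - 1 := by nlinarith
  have hsq : Y ^ 2 ≤ (α * β - 1) ^ 2 := by nlinarith [sq_nonneg (α - β)]
  have hD : Y ≤ α * β - 1 := by
    calc Y = Real.sqrt (Y ^ 2) := (Real.sqrt_sq hY).symm
    _ ≤ Real.sqrt ((α * β - 1) ^ 2) := Real.sqrt_le_sqrt hsq
    _ = α * β - 1 := Real.sqrt_sq h0
  have h1 : (α - β) ^ 2 ≤ (α * β - 1 - s) * (α * β - 1 + Y) := by nlinarith
  have hDs : 0 ≤ α * β - 1 - s := by nlinarith
  nlinarith [mul_nonneg hDs (mul_nonneg (mul_nonneg (sq_nonneg α) (sub_nonneg.2 hβα)) (by linarith : (0:ℝ) ≤ α + 2*β)),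
    mul_le_mul_of_nonneg_left h1 (by positivity : (0:ℝ) ≤ α * β),
    mul_le_mul_of_nonneg_left hD (mul_nonneg (by positivity : (0:ℝ) ≤ α*β) hDs)]

lemma inner_key_aux (u w : EuclideanSpace ℝ (Fin 2)) (h : jb w ≤ jb u) :
    ‖u - w‖ ^ 2 / (jb u) ^ 3 ≤ ⟪(jb u)⁻¹ • u - (jb w)⁻¹ • w, u - w⟫ := by
  set α := jb u with hαdef
  set β := jb w with hβdef
  have hα : 1 ≤ α := jb_ge_one u
  have hβ : 1 ≤ β := jb_ge_one w
  have hαpos : (0:ℝ) < α := by linarith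
  have hβpos : (0:ℝ) < β := by linarith
  have hu2 : ‖u‖ ^ 2 = α ^ 2 - 1 := by have := jb_sq u; linarith
  have hw2 : ‖w‖ ^ 2 = β ^ 2 - 1 := by have := jb_sq w; linarith
  set s := ⟪u, w⟫ with hsdef
  have hY2 : (‖u‖ * ‖w‖) ^ 2 = (α ^ 2 - 1) * (β ^ 2 - 1) := by
    rw [mul_pow, hu2, hw2]
  have hs : s ≤ ‖u‖ * ‖w‖ := real_inner_le_norm u w
  have key := keyR α β s (‖u‖ * ‖w‖) hα hβ h (by positivity) hY2 hs
  have hexp : ⟪α⁻¹ • u - β⁻¹ • w, u - w⟫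
      = α⁻¹ * ‖u‖ ^ 2 - (α⁻¹ + β⁻¹) * s + β⁻¹ * ‖w‖ ^ 2 := by
    rw [inner_sub_left, inner_sub_right, inner_sub_right, real_inner_smul_left,
      real_inner_smul_left, real_inner_smul_left, real_inner_smul_left,
      real_inner_self_eq_norm_sq, real_inner_self_eq_norm_sq]
    rw [real_inner_comm u w]
    rw [← hsdef]
    ring
  rw [hexp, div_le_iff₀ (by positivity)]
  have hnorm : ‖u - w‖ ^ 2 = α ^ 2 + β ^ 2 - 2 - 2 * s := by
    rw [norm_sub_sq_real, hu2, hw2, ← hsdef]; ring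
  rw [hnorm, hu2, hw2]
  have hE : (α⁻¹ * (α ^ 2 - 1) - (α⁻¹ + β⁻¹) * s + β⁻¹ * (β ^ 2 - 1)) * (α * β)
      = (α + β) * (α * β - 1 - s) := by
    field_simp
    ring
  have h2 : (α * β) * (α ^ 2 + β ^ 2 - 2 - 2 * s)
      ≤ (α * β) * ((α⁻¹ * (α ^ 2 - 1) - (α⁻¹ + β⁻¹) * s + β⁻¹ * (β ^ 2 - 1)) * α ^ 3) := by
    calc (α * β) * (α ^ 2 + β ^ 2 - 2 - 2 * s)
        ≤ α ^ 3 * (α + β) * (α * β - 1 - s) := key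
      _ = α ^ 3 * ((α⁻¹ * (α ^ 2 - 1) - (α⁻¹ + β⁻¹) * s + β⁻¹ * (β ^ 2 - 1)) * (α * β)) := by
          rw [hE]; ring
      _ = (α * β) * ((α⁻¹ * (α ^ 2 - 1) - (α⁻¹ + β⁻¹) * s + β⁻¹ * (β ^ 2 - 1)) * α ^ 3) := by
          ring
  exact le_of_mul_le_mul_left h2 (by positivity)

lemma inner_key (u w : EuclideanSpace ℝ (Fin 2)) :
    ‖u - w‖ ^ 2 / (max (jb u) (jb w)) ^ 3 ≤ ⟪(jb u)⁻¹ • u - (jb w)⁻¹ • w, u - w⟫ := by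
  rcases le_total (jb w) (jb u) with h | h
  · rw [max_eq_left h]
    exact inner_key_aux u w h
  · have := inner_key_aux w u h
    rw [max_eq_right h, norm_sub_rev]
    calc ‖w - u‖ ^ 2 / jb w ^ 3 ≤ ⟪(jb w)⁻¹ • w - (jb u)⁻¹ • u, w - u⟫ := this
      _ = ⟪(jb u)⁻¹ • u - (jb w)⁻¹ • w, u - w⟫ := by
          rw [show (jb w)⁻¹ • w - (jb u)⁻¹ • u = -((jb u)⁻¹ • u - (jb w)⁻¹ • w) by abel,
            show w - u = -(u - w) by abel, inner_neg_neg]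

lemma jb_le (x : EuclideanSpace ℝ (Fin 2)) : jb x ≤ 1 + ‖x‖ := by
  have h1 : (0:ℝ) ≤ 1 + ‖x‖ := by positivity
  calc jb x = Real.sqrt (1 + ‖x‖ ^ 2) := rfl
    _ ≤ Real.sqrt ((1 + ‖x‖) ^ 2) := Real.sqrt_le_sqrt (by nlinarith [norm_nonneg x])
    _ = 1 + ‖x‖ := Real.sqrt_sq h1

theorem stmt0 :
    ∃ C > (0 : ℝ), ∀ a b : EuclideanSpace ℝ (Fin 2),
      ‖(jb (a + b))⁻¹ • (a + b) + (jb (a - b))⁻¹ • (a - b)‖ ≥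
        C * ‖a‖ / (1 + ‖a‖ + ‖b‖) ^ 3 := by
  refine ⟨2, by norm_num, fun a b => ?_⟩
  set u := a + b with hu
  set w := b - a with hw
  have hwv : jb (a - b) = jb w := by
    simp only [jb, hw, norm_sub_rev a b]
  have hx : (jb (a + b))⁻¹ • (a + b) + (jb (a - b))⁻¹ • (a - b)
      = (jb u)⁻¹ • u - (jb w)⁻¹ • w := by
    rw [hwv, show a - b = -w by rw [hw]; abel, smul_neg]
    abel
  rw [hx]
  rcases eq_or_ne ‖a‖ 0 with ha | ha
  · rw [ha, mul_zero, zero_div]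
    exact norm_nonneg _
  · have hapos : (0:ℝ) < ‖a‖ := lt_of_le_of_ne (norm_nonneg a) (Ne.symm ha)
    have huw : u - w = a + a := by rw [hu, hw]; abel
    have hnuw : ‖u - w‖ = 2 * ‖a‖ := by
      rw [huw, ← two_smul ℝ a, norm_smul]; simp
    set M := max (jb u) (jb w) with hM
    have hM1 : (1:ℝ) ≤ M := le_trans (jb_ge_one u) (le_max_left _ _)
    have hMpos : (0:ℝ) < M := by linarith
    have h1 := inner_key u w
    have h2 : ⟪(jb u)⁻¹ • u - (jb w)⁻¹ • w, u - w⟫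
        ≤ ‖(jb u)⁻¹ • u - (jb w)⁻¹ • w‖ * ‖u - w‖ := real_inner_le_norm _ _
    have huwpos : (0:ℝ) < ‖u - w‖ := by rw [hnuw]; linarith
    have h3 : ‖u - w‖ / M ^ 3 ≤ ‖(jb u)⁻¹ • u - (jb w)⁻¹ • w‖ := by
      rw [div_le_iff₀ (by positivity)]
      have := le_trans h1 h2
      rw [div_le_iff₀ (by positivity : (0:ℝ) < M ^ 3)] at this
      have h4 : ‖u - w‖ * ‖u - w‖ ≤ (‖(jb u)⁻¹ • u - (jb w)⁻¹ • w‖ * M ^ 3) * ‖u - w‖ := by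
        calc ‖u - w‖ * ‖u - w‖ = ‖u - w‖ ^ 2 := by ring
          _ ≤ ‖(jb u)⁻¹ • u - (jb w)⁻¹ • w‖ * ‖u - w‖ * M ^ 3 := this
          _ = (‖(jb u)⁻¹ • u - (jb w)⁻¹ • w‖ * M ^ 3) * ‖u - w‖ := by ring
      exact le_of_mul_le_mul_right h4 huwpos
    have hR : M ≤ 1 + ‖a‖ + ‖b‖ := by
      have h5 : jb u ≤ 1 + ‖a‖ + ‖b‖ := by
        have := jb_le u
        have h6 : ‖u‖ ≤ ‖a‖ + ‖b‖ := norm_add_le a b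
        linarith
      have h7 : jb w ≤ 1 + ‖a‖ + ‖b‖ := by
        have := jb_le w
        have h8 : ‖w‖ ≤ ‖b‖ + ‖a‖ := norm_sub_le b a
        linarith
      exact max_le h5 h7
    have hfinal : 2 * ‖a‖ / (1 + ‖a‖ + ‖b‖) ^ 3 ≤ ‖u - w‖ / M ^ 3 := by
      rw [hnuw]
      apply div_le_div_of_nonneg_left (by positivity) (by positivity)
      exact pow_le_pow_left₀ (by linarith) hR 3
    exact le_trans hfinal h3
end

section
/- For any real numbers A and B, √(1+A²) + √(1+B²) − √(1+(A+B)²) ≥ C/(√(1+A²)+√(1+B²)) for some absolute constant C > 0 (in fact C = 1 works). -/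
theorem stmt1 :
    ∃ C > (0 : ℝ), ∀ A B : ℝ,
      Real.sqrt (1 + A ^ 2) + Real.sqrt (1 + B ^ 2) - Real.sqrt (1 + (A + B) ^ 2) ≥
        C / (Real.sqrt (1 + A ^ 2) + Real.sqrt (1 + B ^ 2)) := by
  refine ⟨1/2, by norm_num, fun A B => ?_⟩
  set a := Real.sqrt (1 + A ^ 2) with ha
  set b := Real.sqrt (1 + B ^ 2) with hb
  set c := Real.sqrt (1 + (A + B) ^ 2) with hc
  have ha2 : a ^ 2 = 1 + A ^ 2 := Real.sq_sqrt (by positivity)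
  have hb2 : b ^ 2 = 1 + B ^ 2 := Real.sq_sqrt (by positivity)
  have hc2 : c ^ 2 = 1 + (A + B) ^ 2 := Real.sq_sqrt (by positivity)
  have ha0 : (0:ℝ) ≤ a := Real.sqrt_nonneg _
  have hb0 : (0:ℝ) ≤ b := Real.sqrt_nonneg _
  have hc0 : (0:ℝ) ≤ c := Real.sqrt_nonneg _
  have ha1 : (1:ℝ) ≤ a := by nlinarith [sq_nonneg A, sq_nonneg (a - 1)]
  have hb1 : (1:ℝ) ≤ b := by nlinarith [sq_nonneg B, sq_nonneg (b - 1)]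
  have hab : a * b ≥ 1 + A * B := by
    have h1 : a * b = Real.sqrt ((1 + A ^ 2) * (1 + B ^ 2)) := by
      rw [ha, hb, ← Real.sqrt_mul (by positivity)]
    have h2 : Real.sqrt ((1 + A * B) ^ 2) ≤ Real.sqrt ((1 + A ^ 2) * (1 + B ^ 2)) :=
      Real.sqrt_le_sqrt (by nlinarith [sq_nonneg (A - B)])
    have h3 : Real.sqrt ((1 + A * B) ^ 2) = |1 + A * B| := Real.sqrt_sq_eq_abs _
    calc (1:ℝ) + A * B ≤ |1 + A * B| := le_abs_self _
      _ ≤ a * b := by rw [h1, ← h3]; exact h2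
  have hsum : (0:ℝ) < a + b := by linarith
  rw [ge_iff_le, div_le_iff₀ hsum]
  -- key: (a+b)^2 ≥ c^2 + 3, hence c ≤ a+b and (a+b-c)(a+b) ≥ 3/2
  have hkey : c ^ 2 + 3 ≤ (a + b) ^ 2 := by nlinarith
  have hcle : c ≤ a + b := by nlinarith
  nlinarith [mul_pos hsum hsum]
end

section
/- Define a₄(ξ,η) = ⟨ξ⟩ + ⟨ξ/2+η⟩ − ⟨ξ/2−η⟩ for ξ, η ∈ ℝ². Then |a₄(ξ,η)| ≥ C/⟨|ξ|+|η|⟩ for an absolute constant C > 0 and all ξ, η ∈ ℝ². -/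
noncomputable abbrev jbr (r : ℝ) : ℝ := Real.sqrt (1 + r ^ 2)

noncomputable def a₄ (ξ η : EuclideanSpace ℝ (Fin 2)) : ℝ :=
  jb ξ + jb ((1 / 2 : ℝ) • ξ + η) - jb ((1 / 2 : ℝ) • ξ - η)

lemma jbr_sq (r : ℝ) : jbr r ^ 2 = 1 + r ^ 2 :=
  Real.sq_sqrt (by positivity)

lemma one_le_jbr (r : ℝ) : 1 ≤ jbr r := by
  have h := Real.sqrt_le_sqrt (show (1:ℝ) ≤ 1 + r ^ 2 by nlinarith [sq_nonneg r])
  rwa [Real.sqrt_one] at h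

lemma self_le_jbr {r : ℝ} (hr : 0 ≤ r) : r ≤ jbr r := by
  have : r = Real.sqrt (r ^ 2) := by rw [Real.sqrt_sq hr]
  rw [this]
  exact Real.sqrt_le_sqrt (by nlinarith)

lemma jbr_mono {a b : ℝ} (hab : a ≤ b) (ha : 0 ≤ a) : jbr a ≤ jbr b :=
  Real.sqrt_le_sqrt (by nlinarith)

lemma jbr_lip {a b : ℝ} (ha : 0 ≤ a) (hab : a ≤ b) : jbr b ≤ jbr a + (b - a) := by
  have h1 : 0 ≤ jbr a + (b - a) := by
    have := one_le_jbr a; linarith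
  have h2 : 1 + b ^ 2 ≤ (jbr a + (b - a)) ^ 2 := by
    have hs := jbr_sq a
    have := self_le_jbr ha
    nlinarith
  calc jbr b ≤ Real.sqrt ((jbr a + (b - a)) ^ 2) := Real.sqrt_le_sqrt h2
    _ = jbr a + (b - a) := Real.sqrt_sq h1

set_option maxHeartbeats 1000000 in
theorem stmt4 :
    ∃ C > (0 : ℝ), ∀ ξ η : EuclideanSpace ℝ (Fin 2),
      |a₄ ξ η| ≥ C / jbr (‖ξ‖ + ‖η‖) := by
  refine ⟨1/2, by norm_num, fun ξ η => ?_⟩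
  set u := (1 / 2 : ℝ) • ξ + η with hu
  set v := (1 / 2 : ℝ) • ξ - η with hv
  set J := jbr (‖ξ‖ + ‖η‖) with hJ
  have hJ1 : 1 ≤ J := one_le_jbr _
  have hξ0 : (0:ℝ) ≤ ‖ξ‖ := norm_nonneg _
  have hη0 : (0:ℝ) ≤ ‖η‖ := norm_nonneg _
  have hhalf : ‖(1 / 2 : ℝ) • ξ‖ = ‖ξ‖ / 2 := by
    rw [norm_smul]; simp; ring
  have hnu : ‖u‖ ≤ ‖ξ‖ + ‖η‖ := by
    calc ‖u‖ ≤ ‖(1 / 2 : ℝ) • ξ‖ + ‖η‖ := norm_add_le _ _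
      _ ≤ ‖ξ‖ + ‖η‖ := by rw [hhalf]; linarith
  have hnv : ‖v‖ ≤ ‖ξ‖ + ‖η‖ := by
    calc ‖v‖ ≤ ‖(1 / 2 : ℝ) • ξ‖ + ‖η‖ := norm_sub_le _ _
      _ ≤ ‖ξ‖ + ‖η‖ := by rw [hhalf]; linarith
  have hsum : u + v = ξ := by rw [hu, hv]; module
  have hdiff : ‖v‖ - ‖u‖ ≤ ‖ξ‖ := by
    have : ‖v‖ ≤ ‖ξ‖ + ‖u‖ := by
      calc ‖v‖ = ‖ξ - u‖ := by rw [← hsum]; congr 1; abel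
        _ ≤ ‖ξ‖ + ‖u‖ := norm_sub_le _ _
    linarith
  have key : a₄ ξ η ≥ 1 / (2 * J) := by
    have hJpos : (0:ℝ) < 2 * J := by linarith
    rw [a₄, ← hu, ← hv]
    rcases le_or_gt (jb v) (jb u) with h | h
    · have h1 : 1 ≤ jb ξ := one_le_jbr _
      have h2 : 1 / (2 * J) ≤ 1 / 2 := by
        rw [div_le_div_iff₀ hJpos (by norm_num)]; nlinarith
      linarith
    · -- jb u < jb v, so ‖u‖ < ‖v‖
      have hnuv : ‖u‖ ≤ ‖v‖ := by
        by_contra hc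
        push_neg at hc
        exact absurd (jbr_mono hc.le (norm_nonneg _)) (not_le.mpr h)
      have hd : jb v - jb u ≤ ‖v‖ - ‖u‖ := by
        have := jbr_lip (norm_nonneg u) hnuv
        simp only [jb] at *
        linarith
      set d := jb v - jb u with hdd
      have hd0 : 0 < d := by simp only [hdd]; linarith
      set A := jb ξ with hA
      have hA1 : 1 ≤ A := one_le_jbr _
      have hAlow : jbr (‖v‖ - ‖u‖) ≤ A := jbr_mono hdiff (by linarith [norm_nonneg u])
      have hAsq : 1 + (‖v‖ - ‖u‖) ^ 2 ≤ A ^ 2 := by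
        have := jbr_sq (‖v‖ - ‖u‖)
        nlinarith [one_le_jbr (‖v‖ - ‖u‖)]
      have hAd : 1 ≤ (A - d) * (A + d) := by nlinarith
      have hAJ : A ≤ J := jbr_mono (by linarith) hξ0
      have hdJ : d ≤ J := by
        have h1 : jb v ≤ J := jbr_mono hnv (norm_nonneg _)
        have h2 : 0 ≤ jb u := by linarith [one_le_jbr ‖u‖]
        simp only [hdd]; linarith
      have hAdpos : 0 < A + d := by linarith
      have step1 : 1 / (A + d) ≤ A - d := by
        rw [div_le_iff₀ hAdpos]; nlinarith
      have step2 : 1 / (2 * J) ≤ 1 / (A + d) := by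
        apply one_div_le_one_div_of_le hAdpos; linarith
      have : A + jb u - jb v = A - d := by simp only [hdd]; ring
      rw [this]
      linarith
  have hpos : 0 < 1 / (2 * J) := by positivity
  have : (1:ℝ)/2 / J = 1 / (2 * J) := by rw [div_div]
  rw [ge_iff_le, this]
  calc 1 / (2 * J) ≤ a₄ ξ η := key
    _ ≤ |a₄ ξ η| := le_abs_self _
end

section
/- (Infinite-time Gronwall lemma) Let B: [1,∞) → [0,∞) be continuously differentiable and suppose there are constants 0 < ε < 1, δ > 0, K > 0 such that |B'(t)| ≤ (ε/t)·B(t) + δ/t² and B(t) ≤ K/t for all t ≥ 1. Then B(t) ≤ δ/((1−ε)·t) for all t ≥ 1, with bound independent of K. -/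
/-!
If `B(x) ≤ C/x` for `x ≥ 1`, the derivative bound gives `-B' ≤ (εC + δ)/x²`, so
`B(x) - (εC + δ)/x` is nondecreasing; as its values tend to at most `0`, this yields
`B(t) ≤ (εC + δ)/t`. Rather than iterating this bootstrap, apply it once to the optimal
constant `S = sup_{t ≥ 1} t B(t)`, which is finite by the a priori bound: then `S ≤ εS + δ`,
i.e. `S ≤ δ/(1 - ε)`.
-/

open Filter Topology Set

lemma le_div_of_neg_deriv_le {B B' u : ℝ → ℝ} {c t : ℝ} (ht : 0 < t)
    (hderiv : ∀ x ≥ t, HasDerivAt B (B' x) x) (hB' : ∀ x ≥ t, -B' x ≤ c / x ^ 2)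
    (hBu : ∀ᶠ x in atTop, B x ≤ u x) (hu : Tendsto u atTop (𝓝 0)) :
    B t ≤ c / t := by
  have hderiv' : ∀ x ≥ t, HasDerivAt (fun x ↦ B x - c / x) (B' x + c / x ^ 2) x := by
    intro x hx
    have hx0 : x ≠ 0 := (ht.trans_le hx).ne'
    refine ((hderiv x hx).sub ((hasDerivAt_const x c).fun_div (hasDerivAt_id' x) hx0)).congr_deriv ?_
    field_simp
    ring
  have hmono : MonotoneOn (fun x ↦ B x - c / x) (Ici t) := by
    refine monotoneOn_of_hasDerivWithinAt_nonneg (convex_Ici t)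
      (fun x hx ↦ (hderiv' x hx).continuousAt.continuousWithinAt)
      (fun x hx ↦ (hderiv' x (interior_subset hx)).hasDerivWithinAt) fun x hx ↦ ?_
    linarith [hB' x (interior_subset hx)]
  have hlim : Tendsto (fun x ↦ u x - c / x) atTop (𝓝 0) := by
    simpa using hu.sub (tendsto_const_nhds.div_atTop tendsto_id)
  have hsub : B t - c / t ≤ 0 := by
    refine ge_of_tendsto hlim ?_
    filter_upwards [hBu, eventually_ge_atTop t] with x hBx hx
    linarith [hmono self_mem_Ici hx hx]
  linarith

lemma le_div_of_abs_deriv_le_of_le_div {B B' : ℝ → ℝ} {ε δ C : ℝ} (hε : 0 ≤ ε)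
    (hderiv : ∀ t ≥ (1 : ℝ), HasDerivAt B (B' t) t)
    (hbound : ∀ t ≥ (1 : ℝ), |B' t| ≤ ε / t * B t + δ / t ^ 2)
    (hC : ∀ t ≥ (1 : ℝ), B t ≤ C / t) {t : ℝ} (ht : 1 ≤ t) :
    B t ≤ (ε * C + δ) / t := by
  refine le_div_of_neg_deriv_le (by linarith) (fun x hx ↦ hderiv x (ht.trans hx)) (fun x hx ↦ ?_)
    (eventually_ge_atTop 1 |>.mono hC) (tendsto_const_nhds.div_atTop tendsto_id)
  have hx1 : 1 ≤ x := ht.trans hx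
  calc -B' x ≤ |B' x| := neg_le_abs _
    _ ≤ ε / x * B x + δ / x ^ 2 := hbound x hx1
    _ ≤ ε / x * (C / x) + δ / x ^ 2 := by gcongr; exact hC x hx1
    _ = (ε * C + δ) / x ^ 2 := by ring

theorem stmt7_general (B B' : ℝ → ℝ) (ε δ K : ℝ)
    (hε : 0 < ε) (hε1 : ε < 1)
    (hderiv : ∀ t ≥ (1 : ℝ), HasDerivAt B (B' t) t)
    (hbound : ∀ t ≥ (1 : ℝ), |B' t| ≤ ε / t * B t + δ / t ^ 2)
    (hapriori : ∀ t ≥ (1 : ℝ), B t ≤ K / t) :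
    ∀ t ≥ (1 : ℝ), B t ≤ δ / ((1 - ε) * t) := by
  have hpos {t : ℝ} (ht : 1 ≤ t) : 0 < t := by linarith
  set S := sSup ((fun t ↦ t * B t) '' Ici 1)
  have hbdd : BddAbove ((fun t ↦ t * B t) '' Ici 1) :=
    ⟨K, forall_mem_image.2 fun t ht ↦ (le_div_iff₀' (hpos ht)).1 (hapriori t ht)⟩
  have hS : ∀ t ≥ (1 : ℝ), B t ≤ S / t := fun t ht ↦
    (le_div_iff₀' (hpos ht)).2 (le_csSup hbdd (mem_image_of_mem _ ht))
  have hSfix : S ≤ ε * S + δ := csSup_le (nonempty_Ici.image _) <| forall_mem_image.2 fun t ht ↦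
    (le_div_iff₀' (hpos ht)).1 (le_div_of_abs_deriv_le_of_le_div hε.le hderiv hbound hS ht)
  intro t ht
  calc B t ≤ S / t := hS t ht
    _ ≤ δ / (1 - ε) / t := by gcongr; rw [le_div_iff₀ (by linarith)]; linarith
    _ = δ / ((1 - ε) * t) := by rw [div_div]

theorem stmt7 (B B' : ℝ → ℝ) (ε δ K : ℝ)
    (hε : 0 < ε) (hε1 : ε < 1) (hδ : 0 < δ) (hK : 0 < K)
    (hBnonneg : ∀ t ≥ (1 : ℝ), 0 ≤ B t)
    (hderiv : ∀ t ≥ (1 : ℝ), HasDerivAt B (B' t) t)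
    (hcont : ContinuousOn B' (Set.Ici 1))
    (hbound : ∀ t ≥ (1 : ℝ), |B' t| ≤ ε / t * B t + δ / t ^ 2)
    (hapriori : ∀ t ≥ (1 : ℝ), B t ≤ K / t) :
    ∀ t ≥ (1 : ℝ), B t ≤ δ / ((1 - ε) * t) :=
  stmt7_general B B' ε δ K hε hε1 hderiv hbound hapriori
end

section
/- (Infinite-time Gronwall lemma, version 2) Let B: [1,∞) → [0,∞) be continuously differentiable and suppose there are constants σ > 0, 0 < ε < σ, δ > 0, K > 0 such that |B'(t)| ≤ (ε/t)·B(t) + δ/t^{1+σ} and B(t) ≤ K/t^σ for all t ≥ 1. Then B(t) ≤ δ/((σ−ε)·t^σ) for all t ≥ 1. -/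
/-!
With the integrating factor `t^ε`, the lower bound `B' ≥ -(ε/t) B - δ/t^(1+σ)` says that
`g t = t^ε B(t) - δ/(σ-ε) · t^(ε-σ)` is nondecreasing. The a priori bound gives
`g T ≤ (K - δ/(σ-ε)) T^(ε-σ) → 0` because `ε < σ`, so `g ≤ 0`, which is the claim after
dividing by `t^ε`.
-/

open Filter Topology

section

variable {B B' : ℝ → ℝ} {a ε σ δ : ℝ}

lemma hasDerivAt_rpow_mul_sub_rpow {t : ℝ} (ht : 0 < t) (hεσ : ε ≠ σ)
    (hB : HasDerivAt B (B' t) t) :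
    HasDerivAt (fun s => s ^ ε * B s - δ / (σ - ε) * s ^ (ε - σ))
      (t ^ ε * (B' t + ε / t * B t + δ / t ^ (1 + σ))) t := by
  have hpow (p : ℝ) := Real.hasDerivAt_rpow_const (p := p) (Or.inl ht.ne')
  refine (((hpow ε).mul hB).sub ((hpow (ε - σ)).const_mul (δ / (σ - ε)))).congr_deriv ?_
  have hσε : σ - ε ≠ 0 := sub_ne_zero.mpr hεσ.symm
  rw [Real.rpow_sub ht, Real.rpow_sub ht, Real.rpow_sub ht, Real.rpow_add ht, Real.rpow_one]
  field_simp
  ring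

lemma monotoneOn_rpow_mul_sub_rpow (ha : 0 < a) (hεσ : ε ≠ σ)
    (hderiv : ∀ t ≥ a, HasDerivAt B (B' t) t)
    (hbound : ∀ t ≥ a, -B' t ≤ ε / t * B t + δ / t ^ (1 + σ)) :
    MonotoneOn (fun s => s ^ ε * B s - δ / (σ - ε) * s ^ (ε - σ)) (Set.Ici a) := by
  have hD (t : ℝ) (ht : a ≤ t) :=
    hasDerivAt_rpow_mul_sub_rpow (δ := δ) (ha.trans_le ht) hεσ (hderiv t ht)
  refine monotoneOn_of_hasDerivWithinAt_nonneg (convex_Ici a)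
    (fun t ht => (hD t ht).continuousAt.continuousWithinAt)
    (fun t ht => (hD t (interior_subset ht)).hasDerivWithinAt) fun t ht => ?_
  rw [interior_Ici] at ht
  have hlower := hbound t ht.le
  exact mul_nonneg (Real.rpow_nonneg (ha.trans ht).le ε) (by linarith)

lemma MonotoneOn.nonpos_of_le_of_tendsto {g h : ℝ → ℝ} (hg : MonotoneOn g (Set.Ici a))
    (hgh : ∀ T ≥ a, g T ≤ h T) (hh : Tendsto h atTop (𝓝 0)) {t : ℝ} (ht : a ≤ t) : g t ≤ 0 :=
  ge_of_tendsto hh <| (eventually_ge_atTop t).mono fun T hT =>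
    (hg ht (ht.trans hT) hT).trans (hgh T (ht.trans hT))

end

theorem stmt8_general (B B' : ℝ → ℝ) (σ ε δ K : ℝ)
    (hεσ : ε < σ)
    (hderiv : ∀ t ≥ (1 : ℝ), HasDerivAt B (B' t) t)
    (hbound : ∀ t ≥ (1 : ℝ), |B' t| ≤ ε / t * B t + δ / t ^ (1 + σ))
    (hapriori : ∀ t ≥ (1 : ℝ), B t ≤ K / t ^ σ) :
    ∀ t ≥ (1 : ℝ), B t ≤ δ / ((σ - ε) * t ^ σ) := by
  have hmono := monotoneOn_rpow_mul_sub_rpow zero_lt_one hεσ.ne hderiv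
    fun t ht => (neg_le_abs _).trans (hbound t ht)
  have hdecay : Tendsto (fun T : ℝ => (K - δ / (σ - ε)) * T ^ (ε - σ)) atTop (𝓝 0) := by
    have := (tendsto_rpow_neg_atTop (sub_pos.mpr hεσ)).const_mul (K - δ / (σ - ε))
    rwa [neg_sub, mul_zero] at this
  intro t ht
  have hpos : 0 < t ^ ε := Real.rpow_pos_of_pos (zero_lt_one.trans_le ht) ε
  have hg := hmono.nonpos_of_le_of_tendsto (fun T hT => ?_) hdecay ht
  · rw [Real.rpow_sub (zero_lt_one.trans_le ht), mul_div_left_comm, ← mul_sub] at hg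
    rw [← div_div]
    linarith [nonpos_of_mul_nonpos_right hg hpos]
  · rw [sub_mul, Real.rpow_sub (zero_lt_one.trans_le hT), mul_div_left_comm K]
    gcongr
    exact hapriori T hT

theorem stmt8 (B B' : ℝ → ℝ) (σ ε δ K : ℝ)
    (hσ : 0 < σ) (hε : 0 < ε) (hεσ : ε < σ) (hδ : 0 < δ) (hK : 0 < K)
    (hBnonneg : ∀ t ≥ (1 : ℝ), 0 ≤ B t)
    (hderiv : ∀ t ≥ (1 : ℝ), HasDerivAt B (B' t) t)
    (hcont : ContinuousOn B' (Set.Ici 1))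
    (hbound : ∀ t ≥ (1 : ℝ), |B' t| ≤ ε / t * B t + δ / t ^ (1 + σ))
    (hapriori : ∀ t ≥ (1 : ℝ), B t ≤ K / t ^ σ) :
    ∀ t ≥ (1 : ℝ), B t ≤ δ / ((σ - ε) * t ^ σ) :=
  stmt8_general B B' σ ε δ K hεσ hderiv hbound hapriori
end

section
/- Let λ > 0, θ ∈ ℝ, and write g̃(r) = √(B₁(r) + 2√(B₂(r))) where B₁(r) = 2 + 2λ²(r+1) and B₂(r) = (1+λ²(r+1))² − 4λ⁴ r cos²θ. Then for 0 < r ≤ 16δ²/(1+4λ²) with 0 < δ ≤ 1/100, one has |g̃''(r)| ≤ C(λ⁴ + λ⁸) for an absolute constant C. -/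
/-!
Write `g = √(a + 2√b)` with `a = B₁`, `b = B₂`. Two applications of the chain and quotient rules
give `g'' = (a'' + b''/√b - b'²/(2√b³)) / (2g) - (a' + b'/√b)² / (4g³)`. For `0 < r ≤ 1` one has
`b ≥ 1`, hence `g ≥ 2`, while `a' = 2λ²`, `a'' = 0`, `|b'| ≤ 2λ² + 4λ⁴` and `b'' = 2λ⁴`,
so every term is `O(λ⁴ + λ⁸)`.
-/

open Real Filter Topology

theorem hasDerivAt_sqrt_add_two_sqrt {a b : ℝ → ℝ} {x a' b' : ℝ} (ha : HasDerivAt a a' x)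
    (hb : HasDerivAt b b' x) (hbx : 0 < b x) (hx : 0 < a x + 2 * √(b x)) :
    HasDerivAt (fun y => √(a y + 2 * √(b y)))
      ((a' + b' / √(b x)) / (2 * √(a x + 2 * √(b x)))) x := by
  have hsqrt : 0 < √(b x) := sqrt_pos.2 hbx
  refine ((ha.fun_add ((hb.sqrt hbx.ne').const_mul 2)).sqrt hx.ne').congr_deriv ?_
  field_simp

theorem hasDerivAt_deriv_sqrt_add_two_sqrt {a b a' b' : ℝ → ℝ} {x a'' b'' : ℝ}
    (ha : ∀ᶠ y in 𝓝 x, HasDerivAt a (a' y) y) (hb : ∀ᶠ y in 𝓝 x, HasDerivAt b (b' y) y)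
    (ha' : HasDerivAt a' a'' x) (hb' : HasDerivAt b' b'' x)
    (hbx : 0 < b x) (hx : 0 < a x + 2 * √(b x)) :
    HasDerivAt (deriv fun y => √(a y + 2 * √(b y)))
      ((a'' + b'' / √(b x) - b' x ^ 2 / (2 * √(b x) ^ 3)) / (2 * √(a x + 2 * √(b x))) -
        (a' x + b' x / √(b x)) ^ 2 / (4 * √(a x + 2 * √(b x)) ^ 3)) x := by
  have hac : ContinuousAt a x := ha.self_of_nhds.continuousAt
  have hbc : ContinuousAt b x := hb.self_of_nhds.continuousAt
  have hb_pos : ∀ᶠ y in 𝓝 x, 0 < b y := continuousAt_const.eventually_lt hbc hbx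
  have hx_pos : ∀ᶠ y in 𝓝 x, 0 < a y + 2 * √(b y) :=
    continuousAt_const.eventually_lt (hac.add (hbc.sqrt.const_mul 2)) hx
  have hderiv : (deriv fun y => √(a y + 2 * √(b y))) =ᶠ[𝓝 x]
      fun y => (a' y + b' y / √(b y)) / (2 * √(a y + 2 * √(b y))) := by
    filter_upwards [ha, hb, hb_pos, hx_pos] with y hay hby hby_pos hy_pos
    exact (hasDerivAt_sqrt_add_two_sqrt hay hby hby_pos hy_pos).deriv
  have hS : 0 < √(b x) := sqrt_pos.2 hbx
  have hG : 0 < √(a x + 2 * √(b x)) := sqrt_pos.2 hx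
  have hnum := ha'.fun_add (hb'.fun_div (hb.self_of_nhds.sqrt hbx.ne') hS.ne')
  have hden := (hasDerivAt_sqrt_add_two_sqrt ha.self_of_nhds hb.self_of_nhds hbx hx).const_mul 2
  refine ((hnum.div hden (by positivity)).congr_deriv ?_).congr_of_eventuallyEq hderiv
  field_simp
  ring

theorem abs_sqrt_add_two_sqrt_deriv2_le {S G a' b' a'' b'' : ℝ} (hS : 1 ≤ S) (hG : 2 ≤ G) :
    |(a'' + b'' / S - b' ^ 2 / (2 * S ^ 3)) / (2 * G) - (a' + b' / S) ^ 2 / (4 * G ^ 3)| ≤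
      (|a''| + |b''| + b' ^ 2 / 2) / 4 + (|a'| + |b'|) ^ 2 / 32 := by
  have hS0 : 0 < S := by linarith
  have hnum : |a'' + b'' / S - b' ^ 2 / (2 * S ^ 3)| ≤ |a''| + |b''| + b' ^ 2 / 2 := by
    have h₁ : |b'' / S| ≤ |b''| := by
      rw [abs_div, abs_of_pos hS0]; exact div_le_self (abs_nonneg _) hS
    have h₂ : |b' ^ 2 / (2 * S ^ 3)| ≤ b' ^ 2 / 2 := by
      rw [abs_of_nonneg (by positivity)]
      exact div_le_div_of_nonneg_left (sq_nonneg _) two_pos (by nlinarith [one_le_pow₀ (n := 3) hS])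
    calc _ ≤ |a'' + b'' / S| + |b' ^ 2 / (2 * S ^ 3)| := abs_sub _ _
      _ ≤ |a''| + |b'' / S| + |b' ^ 2 / (2 * S ^ 3)| := by gcongr; exact abs_add_le _ _
      _ ≤ _ := by linarith
  have hfirst : |a' + b' / S| ≤ |a'| + |b'| := by
    refine (abs_add_le _ _).trans ?_
    rw [abs_div, abs_of_pos hS0]
    gcongr
    exact div_le_self (abs_nonneg _) hS
  have hG3 : 8 ≤ G ^ 3 := by nlinarith [pow_le_pow_left₀ two_pos.le hG 3]
  calc _ ≤ |(a'' + b'' / S - b' ^ 2 / (2 * S ^ 3)) / (2 * G)| + |(a' + b' / S) ^ 2 / (4 * G ^ 3)| :=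
        abs_sub _ _
    _ ≤ (|a''| + |b''| + b' ^ 2 / 2) / 4 + (|a'| + |b'|) ^ 2 / 32 := by
        rw [abs_div, abs_div, abs_of_pos (by positivity : (0 : ℝ) < 2 * G),
          abs_of_pos (by positivity : (0 : ℝ) < 4 * G ^ 3), abs_pow]
        gcongr <;> linarith

section Explicit

variable {lam c y : ℝ}

theorem one_le_B₂ (hc : c ^ 2 ≤ 1) (hy : 0 ≤ y) :
    1 ≤ (1 + lam ^ 2 * (y + 1)) ^ 2 - 4 * lam ^ 4 * y * c ^ 2 := by
  have : 4 * lam ^ 4 * y * c ^ 2 ≤ 4 * lam ^ 4 * y :=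
    mul_le_of_le_one_right (by positivity) hc
  nlinarith [sq_nonneg (lam ^ 2 * (y - 1)), sq_nonneg lam]

theorem abs_deriv_B₂_le (hc : c ^ 2 ≤ 1) (hy₀ : 0 ≤ y) (hy₁ : y ≤ 1) :
    |2 * lam ^ 2 * (1 + lam ^ 2 * (y + 1)) - 4 * lam ^ 4 * c ^ 2| ≤ 2 * lam ^ 2 + 4 * lam ^ 4 := by
  have hc4 : 4 * lam ^ 4 * c ^ 2 ≤ 4 * lam ^ 4 := mul_le_of_le_one_right (by positivity) hc
  have : 0 ≤ lam ^ 4 * c ^ 2 := by positivity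
  rw [abs_le]; constructor <;> nlinarith [sq_nonneg lam, pow_nonneg (sq_nonneg lam) 2]

theorem hasDerivAt_B₁ : HasDerivAt (fun y => 2 + 2 * lam ^ 2 * (y + 1)) (2 * lam ^ 2) y := by
  refine (((hasDerivAt_id' y).add_const 1).const_mul (2 * lam ^ 2)).const_add 2 |>.congr_deriv ?_
  ring

theorem hasDerivAt_B₂ :
    HasDerivAt (fun y => (1 + lam ^ 2 * (y + 1)) ^ 2 - 4 * lam ^ 4 * y * c ^ 2)
      (2 * lam ^ 2 * (1 + lam ^ 2 * (y + 1)) - 4 * lam ^ 4 * c ^ 2) y := by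
  have h := ((((hasDerivAt_id' y).add_const 1).const_mul (lam ^ 2)).const_add 1).fun_pow 2
  refine (h.sub (((hasDerivAt_id' y).const_mul (4 * lam ^ 4)).mul_const (c ^ 2))).congr_deriv ?_
  ring

theorem hasDerivAt_deriv_B₂ :
    HasDerivAt (fun y => 2 * lam ^ 2 * (1 + lam ^ 2 * (y + 1)) - 4 * lam ^ 4 * c ^ 2)
      (2 * lam ^ 4) y := by
  refine (((((hasDerivAt_id' y).add_const 1).const_mul (lam ^ 2)).const_add 1).const_mul
    (2 * lam ^ 2)).sub_const (4 * lam ^ 4 * c ^ 2) |>.congr_deriv ?_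
  ring

end Explicit

theorem stmt14 :
    ∃ C > (0 : ℝ), ∀ lam θ δ r : ℝ, 0 < lam → 0 < δ → δ ≤ 1 / 100 →
      0 < r → r ≤ 16 * δ ^ 2 / (1 + 4 * lam ^ 2) →
      |deriv (deriv (fun r : ℝ =>
          Real.sqrt ((2 + 2 * lam ^ 2 * (r + 1)) +
            2 * Real.sqrt ((1 + lam ^ 2 * (r + 1)) ^ 2 -
              4 * lam ^ 4 * r * Real.cos θ ^ 2)))) r| ≤ C * (lam ^ 4 + lam ^ 8) := by
  refine ⟨4, by norm_num, fun lam θ δ r hlam hδ hδ₁ hr hr_le => ?_⟩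
  have hr₁ : r ≤ 1 := hr_le.trans <| (div_le_self (by positivity) (by nlinarith)).trans (by nlinarith)
  have hc : cos θ ^ 2 ≤ 1 := cos_sq_le_one θ
  have hB₂ := one_le_B₂ (lam := lam) hc hr.le
  have hS : 1 ≤ √((1 + lam ^ 2 * (r + 1)) ^ 2 - 4 * lam ^ 4 * r * cos θ ^ 2) :=
    one_le_sqrt.2 hB₂
  have hG : 2 ≤ √((2 + 2 * lam ^ 2 * (r + 1)) +
      2 * √((1 + lam ^ 2 * (r + 1)) ^ 2 - 4 * lam ^ 4 * r * cos θ ^ 2)) :=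
    le_sqrt_of_sq_le (by nlinarith [sq_nonneg lam])
  rw [(hasDerivAt_deriv_sqrt_add_two_sqrt (.of_forall fun _ => hasDerivAt_B₁)
    (.of_forall fun _ => hasDerivAt_B₂) (hasDerivAt_const r (2 * lam ^ 2)) hasDerivAt_deriv_B₂
    (by linarith) (by positivity)).deriv]
  refine (abs_sqrt_add_two_sqrt_deriv2_le hS hG).trans ?_
  have hb' := abs_deriv_B₂_le (lam := lam) hc hr.le hr₁
  rw [abs_zero, abs_of_pos (by positivity : (0 : ℝ) < 2 * lam ^ 4),
    abs_of_pos (by positivity : (0 : ℝ) < 2 * lam ^ 2)]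
  nlinarith [pow_le_pow_left₀ (abs_nonneg _) hb' 2, sq_abs (2 * lam ^ 2 * (1 + lam ^ 2 * (r + 1)) -
    4 * lam ^ 4 * cos θ ^ 2), sq_nonneg (lam ^ 2 - lam ^ 4)]
end
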